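/- arXiv:1210.6299 — 5 statements merged into one kernel-verified Lean document; each statement's English description precedes it below -/
import Mathlib

section
/- Under the hypotheses of folding (σ an admissible automorphism of the symmetrizable generalized Cartan matrix A), the folding map π on root lattices intertwines the orbit reflection s_ī^σ := Π_{t∈ī} s_t (a well-defined product since the simple reflections for indices in one orbit pairwise commute) with the simple reflection s_ī of the folded root system: s_ī(π(α)) = π(s_ī^σ(α)) for every element α of the root lattice of A. -/
open scoped Classical

/-- `A` is a symmetrizable generalized Cartan matrix. -/
def IsGCM {I : Type*} [Fintype I] (A : I → I → ℤ) : Prop :=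
  (∀ i, A i i = 2) ∧ (∀ i j, i ≠ j → A i j ≤ 0) ∧ (∀ i j, A i j = 0 ↔ A j i = 0) ∧
  ∃ d : I → ℤ, (∀ i, 0 < d i) ∧ ∀ i j, d i * A i j = d j * A j i

/-- The simple reflection `s_i` acting on the root lattice. -/
def srefl {I : Type*} [Fintype I] [DecidableEq I] (A : I → I → ℤ) (i : I)
    (v : I → ℤ) : I → ℤ :=
  fun k => if k = i then v i - ∑ j, A i j * v j else v k

/-- The setoid on `I` whose classes are the `σ`-orbits. -/
def orbitSetoid {I : Type*} (σ : Equiv.Perm I) : Setoid I :=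
  ⟨σ.SameCycle, ⟨fun _ => Equiv.Perm.SameCycle.refl σ _,
    Equiv.Perm.SameCycle.symm, Equiv.Perm.SameCycle.trans⟩⟩

/-- The folded Cartan matrix, indexed by `σ`-orbits: `ā_{ī j̄} = Σ_{s∈ī} a_{s j}`. -/
noncomputable def foldedMatrix {I : Type*} [Fintype I] (A : I → I → ℤ)
    (σ : Equiv.Perm I) :
    Quotient (orbitSetoid σ) → Quotient (orbitSetoid σ) → ℤ :=
  fun q r => ∑ s ∈ Finset.univ.filter (fun s => σ.SameCycle q.out s), A s r.out

/-- The folding map on root lattices, sending `αᵢ` to `α_{ī}`. -/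
noncomputable def foldVec {I : Type*} [Fintype I] (σ : Equiv.Perm I)
    (α : I → ℤ) : Quotient (orbitSetoid σ) → ℤ :=
  fun q => ∑ s ∈ Finset.univ.filter (fun s => σ.SameCycle q.out s), α s

/-! Both sides agree with `π α` off the orbit `k̄`. Since the reflections `s_t`, `t ∈ k̄`, are
pairwise orthogonal, `s_k̄^σ α = α - Σ_{t ∈ k̄} ⟨α, α_t^∨⟩ α_t`, so `π (s_k̄^σ α)` lowers the `k̄`-th
coordinate of `π α` by `Σ_{t ∈ k̄} Σ_j a_{t j} α_j`. By `σ`-invariance of `A`, the orbit column sum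
`Σ_{t ∈ k̄} a_{t j}` depends only on the orbit of `j`, where it equals `ā_{k̄ j̄}`; so that decrease is
`Σ_{r̄} ā_{k̄ r̄} (π α)_{r̄}`, the decrease made by the folded reflection `s_k̄`. -/

section Reflections

variable {I : Type*} [Fintype I] [DecidableEq I] (A : I → I → ℤ)

/-- Each `s_t` only changes the `t`-th coordinate, and it does not see the reflections applied
before it since `a_{t t'} = 0`. -/
theorem foldr_srefl_apply {L : List I} (hL : L.Nodup)
    (horth : L.Pairwise fun t t' => A t t' = 0) (α : I → ℤ) (x : I) :
    L.foldr (srefl A) α x = if x ∈ L then α x - ∑ j, A x j * α j else α x := by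
  induction L generalizing x with
  | nil => simp
  | cons t L ih =>
    obtain ⟨htL, hL⟩ := List.nodup_cons.mp hL
    obtain ⟨hAt, horth⟩ := List.pairwise_cons.mp horth
    have ih := ih hL horth
    have hsum : ∑ j, A t j * L.foldr (srefl A) α j = ∑ j, A t j * α j := by
      refine Finset.sum_congr rfl fun j _ => ?_
      by_cases hj : j ∈ L
      · simp [hAt j hj]
      · simp [ih, hj]
    by_cases hx : x = t
    · subst hx
      simp only [List.foldr_cons, srefl, hsum]
      simp [ih, htL]
    · simp [srefl, ih, hx]

end Reflections

section Folding

variable {I : Type*} {σ : Equiv.Perm I}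

theorem sameCycle_out_iff_mk_eq {q : Quotient (orbitSetoid σ)} {s : I} :
    σ.SameCycle q.out s ↔ Quotient.mk (orbitSetoid σ) s = q := by
  rw [Quotient.mk_eq_iff_out]
  exact Equiv.Perm.sameCycle_comm

theorem filter_sameCycle_out_eq_fiber [Fintype I] (q : Quotient (orbitSetoid σ)) :
    Finset.univ.filter (fun s => σ.SameCycle q.out s)
      = Finset.univ.filter (fun s => Quotient.mk (orbitSetoid σ) s = q) := by
  ext s
  simp only [Finset.mem_filter, Finset.mem_univ, true_and, sameCycle_out_iff_mk_eq]

theorem foldVec_eq_sum_fiber [Fintype I] (α : I → ℤ) (q : Quotient (orbitSetoid σ)) :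
    foldVec σ α q
      = ∑ s ∈ Finset.univ.filter (fun s => Quotient.mk (orbitSetoid σ) s = q), α s := by
  rw [foldVec, filter_sameCycle_out_eq_fiber]

theorem orbitSetoid_mk_apply (s : I) :
    Quotient.mk (orbitSetoid σ) (σ s) = Quotient.mk (orbitSetoid σ) s :=
  Quotient.sound (Equiv.Perm.SameCycle.refl σ s).apply_left

theorem apply_eq_of_sameCycle [Finite I] {β : Type*} {c : I → β} (hc : ∀ x, c (σ x) = c x)
    {x y : I} (h : σ.SameCycle x y) : c x = c y := by
  obtain ⟨n, -, rfl⟩ := h.exists_nat_pow_eq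
  have hsemi : Function.Semiconj c σ id := hc
  rw [← Equiv.Perm.iterate_eq_pow, hsemi.iterate_right n x, Function.iterate_id, id]

variable [Fintype I] {A : I → I → ℤ}

/-- The column sums of `A` over an orbit are `σ`-invariant, which is what makes `foldedMatrix`
independent of the chosen representative `r.out`. -/
theorem foldedMatrix_mk (haut : ∀ i j, A (σ i) (σ j) = A i j)
    (q : Quotient (orbitSetoid σ)) (j : I) :
    foldedMatrix A σ q (Quotient.mk (orbitSetoid σ) j)
      = ∑ s ∈ Finset.univ.filter (fun s => Quotient.mk (orbitSetoid σ) s = q), A s j := by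
  set fiber := Finset.univ.filter (fun s => Quotient.mk (orbitSetoid σ) s = q)
  have hinv : ∀ x, ∑ s ∈ fiber, A s (σ x) = ∑ s ∈ fiber, A s x := fun x =>
    (Finset.sum_equiv σ (fun s => by simp [fiber, orbitSetoid_mk_apply])
      (fun s _ => (haut s x).symm)).symm
  rw [foldedMatrix, filter_sameCycle_out_eq_fiber]
  exact apply_eq_of_sameCycle (c := fun x => ∑ s ∈ fiber, A s x) hinv
    (Quotient.mk_out (s := orbitSetoid σ) j)

theorem sum_foldedMatrix_mul_foldVec (haut : ∀ i j, A (σ i) (σ j) = A i j)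
    (q : Quotient (orbitSetoid σ)) (α : I → ℤ) :
    ∑ r, foldedMatrix A σ q r * foldVec σ α r
      = ∑ s ∈ Finset.univ.filter (fun s => Quotient.mk (orbitSetoid σ) s = q),
          ∑ j, A s j * α j := by
  calc ∑ r, foldedMatrix A σ q r * foldVec σ α r
      = ∑ r, ∑ j ∈ Finset.univ.filter (fun j => Quotient.mk (orbitSetoid σ) j = r),
          foldedMatrix A σ q (Quotient.mk (orbitSetoid σ) j) * α j := by
        refine Finset.sum_congr rfl fun r _ => ?_
        rw [foldVec_eq_sum_fiber, Finset.mul_sum]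
        refine Finset.sum_congr rfl fun j hj => ?_
        rw [(Finset.mem_filter.mp hj).2]
    _ = ∑ j, foldedMatrix A σ q (Quotient.mk (orbitSetoid σ) j) * α j :=
        Finset.sum_fiberwise _ _ _
    _ = _ := by
        simp_rw [foldedMatrix_mk haut, Finset.sum_mul]
        exact Finset.sum_comm

theorem foldr_srefl_orbit_apply [DecidableEq I]
    (hadm : ∀ i₁ i₂, i₁ ≠ i₂ → σ.SameCycle i₁ i₂ → A i₁ i₂ = 0) (k : I) (α : I → ℤ) (x : I) :
    ((Finset.univ.filter (fun t => σ.SameCycle k t)).toList).foldr (srefl A) α x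
      = if Quotient.mk (orbitSetoid σ) x = Quotient.mk (orbitSetoid σ) k
        then α x - ∑ j, A x j * α j else α x := by
  have hmem : ∀ x, x ∈ (Finset.univ.filter (fun t => σ.SameCycle k t)).toList
      ↔ Quotient.mk (orbitSetoid σ) x = Quotient.mk (orbitSetoid σ) k := fun x => by
    simp only [Finset.mem_toList, Finset.mem_filter, Finset.mem_univ, true_and, Quotient.eq]
    exact Equiv.Perm.sameCycle_comm
  have horth : ((Finset.univ.filter (fun t => σ.SameCycle k t)).toList).Pairwise
      fun t t' => A t t' = 0 :=
    (Finset.nodup_toList _).pairwise_of_forall_ne fun t ht t' ht' hne =>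
      hadm t t' hne (Quotient.exact (((hmem t).mp ht).trans ((hmem t').mp ht').symm))
  rw [foldr_srefl_apply A (Finset.nodup_toList _) horth]
  exact if_congr (hmem x) rfl rfl

end Folding

theorem folding_intertwines_reflections_general {I : Type*} [Fintype I] [DecidableEq I]
    (A : I → I → ℤ) (σ : Equiv.Perm I)
    (haut : ∀ i j, A (σ i) (σ j) = A i j)
    (hadm : ∀ i₁ i₂, i₁ ≠ i₂ → σ.SameCycle i₁ i₂ → A i₁ i₂ = 0)
    (k : I) (α : I → ℤ) :
    srefl (foldedMatrix A σ) (Quotient.mk (orbitSetoid σ) k) (foldVec σ α)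
      = foldVec σ
          (((Finset.univ.filter (fun t => σ.SameCycle k t)).toList).foldr
            (fun t w => srefl A t w) α) := by
  funext q
  dsimp only [srefl]
  by_cases hq : q = Quotient.mk (orbitSetoid σ) k
  · rw [if_pos hq, hq, sum_foldedMatrix_mul_foldVec haut, foldVec_eq_sum_fiber,
      foldVec_eq_sum_fiber, ← Finset.sum_sub_distrib]
    refine Finset.sum_congr rfl fun s hs => ?_
    rw [foldr_srefl_orbit_apply hadm, if_pos (Finset.mem_filter.mp hs).2]
  · rw [if_neg hq, foldVec_eq_sum_fiber, foldVec_eq_sum_fiber]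
    refine Finset.sum_congr rfl fun s hs => ?_
    rw [foldr_srefl_orbit_apply hadm, if_neg ((Finset.mem_filter.mp hs).2 ▸ hq)]

/-- The folding map intertwines the orbit reflection `s_k̄^σ = Π_{t∈k̄} s_t`
(the product of the pairwise commuting simple reflections at the indices of the
orbit of `k`) with the simple reflection of the folded root system at `k̄`. -/
theorem folding_intertwines_reflections {I : Type*} [Fintype I] [DecidableEq I]
    (A : I → I → ℤ) (hA : IsGCM A) (σ : Equiv.Perm I)
    (haut : ∀ i j, A (σ i) (σ j) = A i j)
    (hadm : ∀ i₁ i₂, i₁ ≠ i₂ → σ.SameCycle i₁ i₂ → A i₁ i₂ = 0)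
    (k : I) (α : I → ℤ) :
    srefl (foldedMatrix A σ) (Quotient.mk (orbitSetoid σ) k) (foldVec σ α)
      = foldVec σ
          (((Finset.univ.filter (fun t => σ.SameCycle k t)).toList).foldr
            (fun t w => srefl A t w) α) :=
  folding_intertwines_reflections_general A σ haut hadm k α
end

section
/- Let B be a skew-symmetrizable matrix with admissible automorphism σ and let k₁,…,k_m be the elements of a single σ-orbit k̄. Then the composite mutation μ_{k̄}^σ := μ_{k_m}∘⋯∘μ_{k₁} applied to B is given in closed form by: (μ_{k̄}^σ B)_{ij} = −b_{ij} if i ∈ k̄ or j ∈ k̄, and b_{ij} + Σ_{t∈k̄}(b_{it}[b_{tj}]_+ + [−b_{it}]_+ b_{tj}) otherwise. -/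
/-! Mutating one index `t` after another, when `B` vanishes between any two distinct indices of
the orbit, never changes the row and column of an index not yet mutated; so each step adds its
own correction term `b_{it}[b_{tj}]_+ + [-b_{it}]_+ b_{tj}` computed from the original `B`, and
the composite is a simultaneous mutation at the whole orbit. -/

open scoped Classical

/-- Matrix mutation in direction `k`, for a matrix indexed by `I`. -/
def mutateB {I : Type*} [DecidableEq I] (B : I → I → ℤ) (k : I) : I → I → ℤ :=
  fun i j =>
    if i = k ∨ j = k then -B i j
    else B i j + B i k * max (B k j) 0 + max (-B i k) 0 * B k j

section SimultaneousMutation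

variable {I : Type*} [DecidableEq I]

def simultaneousMutateB (B : I → I → ℤ) (S : Finset I) : I → I → ℤ :=
  fun i j =>
    if i ∈ S ∨ j ∈ S then -B i j
    else B i j + ∑ t ∈ S, (B i t * max (B t j) 0 + max (-B i t) 0 * B t j)

theorem simultaneousMutateB_col_eq_of_notMem {B : I → I → ℤ} {S : Finset I} {t : I}
    (hcol : ∀ s ∈ S, B s t = 0) (ht : t ∉ S) (i : I) :
    simultaneousMutateB B S i t = B i t := by
  by_cases hi : i ∈ S
  · simp [simultaneousMutateB, hi, hcol i hi]
  · simp only [simultaneousMutateB, hi, ht, or_self, if_false, add_eq_left]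
    exact Finset.sum_eq_zero fun s hs => by simp [hcol s hs]

theorem simultaneousMutateB_row_eq_of_notMem {B : I → I → ℤ} {S : Finset I} {t : I}
    (hrow : ∀ s ∈ S, B t s = 0) (ht : t ∉ S) (j : I) :
    simultaneousMutateB B S t j = B t j := by
  by_cases hj : j ∈ S
  · simp [simultaneousMutateB, hj, hrow j hj]
  · simp only [simultaneousMutateB, hj, ht, or_self, if_false, add_eq_left]
    exact Finset.sum_eq_zero fun s hs => by simp [hrow s hs]

theorem mutateB_simultaneousMutateB {B : I → I → ℤ} {S : Finset I} {t : I}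
    (hcol : ∀ s ∈ S, B s t = 0) (hrow : ∀ s ∈ S, B t s = 0) (ht : t ∉ S) :
    mutateB (simultaneousMutateB B S) t = simultaneousMutateB B (insert t S) := by
  funext i j
  have hMit := simultaneousMutateB_col_eq_of_notMem hcol ht i
  have hMtj := simultaneousMutateB_row_eq_of_notMem hrow ht j
  rcases eq_or_ne i t with rfl | hit
  · simp only [mutateB, true_or, if_true]
    rw [hMtj]
    simp [simultaneousMutateB]
  rcases eq_or_ne j t with rfl | hjt
  · simp only [mutateB, or_true, if_true]
    rw [hMit]
    simp [simultaneousMutateB]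
  simp only [mutateB, hit, hjt, or_self, if_false, hMit, hMtj]
  by_cases hS : i ∈ S ∨ j ∈ S
  · have hcorr : B i t * max (B t j) 0 + max (-B i t) 0 * B t j = 0 := by
      rcases hS with hi | hj
      · simp [hcol i hi]
      · simp [hrow j hj]
    have hS' : i ∈ insert t S ∨ j ∈ insert t S :=
      hS.imp Finset.mem_insert_of_mem Finset.mem_insert_of_mem
    simp only [simultaneousMutateB, if_pos hS, if_pos hS', add_assoc, hcorr, add_zero]
  · simp only [simultaneousMutateB, hS, Finset.mem_insert, hit, hjt, false_or, if_false,
      Finset.sum_insert ht]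
    ring

theorem foldr_mutateB_eq_simultaneousMutateB (B : I → I → ℤ) {L : List I} (hnd : L.Nodup)
    (hL : L.Pairwise fun s t => B s t = 0 ∧ B t s = 0) :
    L.foldr (fun t M => mutateB M t) B = simultaneousMutateB B L.toFinset := by
  induction L with
  | nil => funext i j; simp [simultaneousMutateB]
  | cons t L ih =>
    obtain ⟨htL, hnd⟩ := List.nodup_cons.mp hnd
    obtain ⟨htL_zero, hL⟩ := List.pairwise_cons.mp hL
    rw [List.foldr_cons, ih hnd hL, List.toFinset_cons]
    exact mutateB_simultaneousMutateB (fun s hs => (htL_zero s (List.mem_toFinset.mp hs)).2)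
      (fun s hs => (htL_zero s (List.mem_toFinset.mp hs)).1) (List.mem_toFinset.not.mpr htL)

end SimultaneousMutation

theorem orbit_mutation_closed_form_general {I : Type*} [Fintype I] [DecidableEq I]
    (B : I → I → ℤ)
    (σ : Equiv.Perm I)
    (hadm : ∀ i₁ i₂, σ.SameCycle i₁ i₂ →
      (i₁ ≠ i₂ → B i₁ i₂ = 0) ∧ ∀ j, 0 ≤ B i₁ j * B i₂ j)
    (k : I) :
    ((Finset.univ.filter (fun t => σ.SameCycle k t)).toList.foldr
        (fun t M => mutateB M t) B)
      = fun i j =>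
          if σ.SameCycle k i ∨ σ.SameCycle k j then -B i j
          else B i j + ∑ t ∈ Finset.univ.filter (fun t => σ.SameCycle k t),
            (B i t * max (B t j) 0 + max (-B i t) 0 * B t j) := by
  set orbit := Finset.univ.filter (fun t => σ.SameCycle k t)
  have hmem : ∀ x, x ∈ orbit ↔ σ.SameCycle k x := by simp [orbit]
  have horbit : orbit.toList.Pairwise fun s t => B s t = 0 ∧ B t s = 0 := by
    refine orbit.nodup_toList.pairwise_of_forall_ne fun s hs t ht hst => ?_
    have hst_cycle : σ.SameCycle s t :=
      ((hmem s).mp (Finset.mem_toList.mp hs)).symm.trans ((hmem t).mp (Finset.mem_toList.mp ht))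
    exact ⟨(hadm s t hst_cycle).1 hst, (hadm t s hst_cycle.symm).1 hst.symm⟩
  rw [foldr_mutateB_eq_simultaneousMutateB B orbit.nodup_toList horbit, Finset.toList_toFinset]
  funext i j
  simp only [simultaneousMutateB, hmem]

/-- Closed form for the orbit mutation `μ_{k̄}^σ = Π_{t∈k̄} μ_t` of a
skew-symmetrizable matrix with an admissible automorphism `σ`. -/
theorem orbit_mutation_closed_form {I : Type*} [Fintype I] [DecidableEq I]
    (B : I → I → ℤ)
    (hskew : ∃ d : I → ℤ, (∀ i, 0 < d i) ∧ ∀ i j, d i * B i j = -(d j * B j i))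
    (σ : Equiv.Perm I)
    (haut : ∀ i j, B (σ i) (σ j) = B i j)
    (hadm : ∀ i₁ i₂, σ.SameCycle i₁ i₂ →
      (i₁ ≠ i₂ → B i₁ i₂ = 0) ∧ ∀ j, 0 ≤ B i₁ j * B i₂ j)
    (k : I) :
    ((Finset.univ.filter (fun t => σ.SameCycle k t)).toList.foldr
        (fun t M => mutateB M t) B)
      = fun i j =>
          if σ.SameCycle k i ∨ σ.SameCycle k j then -B i j
          else B i j + ∑ t ∈ Finset.univ.filter (fun t => σ.SameCycle k t),
            (B i t * max (B t j) 0 + max (-B i t) 0 * B t j) :=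
  orbit_mutation_closed_form_general B σ hadm k
end

section
/- Let B be a skew-symmetrizable matrix with admissible automorphism σ, and suppose C = (c_{ij}) is an integer matrix satisfying c_{σ(i)σ(j)} = c_{ij} for all i, j. If (B', C') is obtained from (B, C) by a single orbit-mutation μ_{k̄}^σ (composing the C-matrix mutations over all indices in the σ-orbit k̄), then C' also satisfies c'_{σ(i)σ(j)} = c'_{ij} for all i, j. -/
open scoped Classical

/-- Mutation of a pair (exchange matrix, C-matrix) in direction `k`. -/
def mutatePair {I : Type*} [DecidableEq I] (p : (I → I → ℤ) × (I → I → ℤ)) (k : I) :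
    (I → I → ℤ) × (I → I → ℤ) :=
  (mutateB p.1 k,
    fun i j =>
      if j = k then -p.2 i j
      else p.2 i j + p.2 i k * max (p.1 k j) 0 + max (-p.2 i k) 0 * p.1 k j)

/-!
Relabelling the indices by `σ` turns mutation at `t` into mutation at `σ⁻¹ t`, so relabelling
the orbit mutation of `(B, C)` gives the mutations of the relabelled pair, which is `(B, C)`
itself, along the list `σ⁻¹ k̄`. This list is a permutation of `k̄`, and mutations in directions
`t₁ ≠ t₂` commute as soon as `b_{t₁t₂} = b_{t₂t₁} = 0`; admissibility gives this for the orbit,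
and mutating inside the orbit keeps these entries zero.
-/

namespace ClusterMutation

variable {I : Type*} [DecidableEq I]

/-- Mutation along a list of directions, the last entry being mutated first. -/
def mutateSeq (l : List I) (p : (I → I → ℤ) × (I → I → ℤ)) : (I → I → ℤ) × (I → I → ℤ) :=
  l.foldr (fun t q => mutatePair q t) p

@[simp]
lemma mutateSeq_nil (p : (I → I → ℤ) × (I → I → ℤ)) : mutateSeq [] p = p := rfl

@[simp]
lemma mutateSeq_cons (t : I) (l : List I) (p : (I → I → ℤ) × (I → I → ℤ)) :
    mutateSeq (t :: l) p = mutatePair (mutateSeq l p) t := rfl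

def relabel (σ : Equiv.Perm I) (M : I → I → ℤ) : I → I → ℤ :=
  fun i j => M (σ i) (σ j)

lemma mutatePair_relabel (σ : Equiv.Perm I) (p : (I → I → ℤ) × (I → I → ℤ)) (t : I) :
    Prod.map (relabel σ) (relabel σ) (mutatePair p t)
      = mutatePair (Prod.map (relabel σ) (relabel σ) p) (σ.symm t) := by
  have hσ : ∀ i, (σ i = t) = (i = σ.symm t) := fun i => propext σ.eq_symm_apply.symm
  ext i j <;> simp only [Prod.map, mutatePair, mutateB, relabel, hσ, Equiv.apply_symm_apply]

lemma mutateSeq_relabel (σ : Equiv.Perm I) (l : List I) (p : (I → I → ℤ) × (I → I → ℤ)) :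
    Prod.map (relabel σ) (relabel σ) (mutateSeq l p)
      = mutateSeq (l.map σ.symm) (Prod.map (relabel σ) (relabel σ) p) := by
  induction l with
  | nil => rfl
  | cons t l ih => rw [List.map_cons, mutateSeq_cons, mutateSeq_cons, mutatePair_relabel, ih]

lemma mutatePair_mutatePair_comm (p : (I → I → ℤ) × (I → I → ℤ)) {t₁ t₂ : I}
    (hne : t₁ ≠ t₂) (h₁₂ : p.1 t₁ t₂ = 0) (h₂₁ : p.1 t₂ t₁ = 0) :
    mutatePair (mutatePair p t₁) t₂ = mutatePair (mutatePair p t₂) t₁ := by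
  obtain ⟨B, C⟩ := p
  have hne' := hne.symm
  dsimp only at h₁₂ h₂₁
  ext i j <;> simp only [mutatePair, mutateB] <;> split_ifs <;> simp_all <;> ring

lemma pairwise_mutateB {S : Set I} {B : I → I → ℤ} (hB : S.Pairwise fun a b => B a b = 0)
    {t : I} (ht : t ∈ S) : S.Pairwise fun a b => mutateB B t a b = 0 := by
  intro a ha b hb hab
  simp only [mutateB]
  split_ifs with h
  · simp [hB ha hb hab]
  · push Not at h
    simp [hB ha hb hab, hB ha ht h.1, hB ht hb (Ne.symm h.2)]

lemma pairwise_mutateSeq {S : Set I} {p : (I → I → ℤ) × (I → I → ℤ)}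
    (hp : S.Pairwise fun a b => p.1 a b = 0) {l : List I} (hl : ∀ t ∈ l, t ∈ S) :
    S.Pairwise fun a b => (mutateSeq l p).1 a b = 0 := by
  induction l with
  | nil => exact hp
  | cons t l ih =>
    exact pairwise_mutateB (ih fun s hs => hl s (List.mem_cons_of_mem t hs)) (hl t (by simp))

lemma mutateSeq_perm {S : Set I} {l₁ l₂ : List I} (hperm : l₁.Perm l₂)
    {p : (I → I → ℤ) × (I → I → ℤ)} (hp : S.Pairwise fun a b => p.1 a b = 0)
    (hl : ∀ t ∈ l₁, t ∈ S) : mutateSeq l₁ p = mutateSeq l₂ p := by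
  induction hperm with
  | nil => rfl
  | cons t _ ih => rw [mutateSeq_cons, mutateSeq_cons, ih fun s hs => hl s (by simp [hs])]
  | swap t₁ t₂ l =>
    simp only [mutateSeq_cons]
    by_cases hne : t₁ = t₂
    · rw [hne]
    have hq := pairwise_mutateSeq hp (l := l) fun s hs => hl s (by simp [hs])
    have h₁ : t₁ ∈ S := hl t₁ (by simp)
    have h₂ : t₂ ∈ S := hl t₂ (by simp)
    exact mutatePair_mutatePair_comm _ hne (hq h₁ h₂ hne) (hq h₂ h₁ (Ne.symm hne))
  | trans h₁₂ _ ih₁ ih₂ => rw [ih₁ hl, ih₂ fun s hs => hl s (h₁₂.mem_iff.mpr hs)]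

lemma orbit_toList_map_symm_perm [Fintype I] (σ : Equiv.Perm I) (k : I) :
    ((Finset.univ.filter (σ.SameCycle k)).toList.map σ.symm).Perm
      (Finset.univ.filter (σ.SameCycle k)).toList :=
  (List.perm_ext_iff_of_nodup ((Finset.nodup_toList _).map σ.symm.injective)
      (Finset.nodup_toList _)).mpr fun t => by
    simp [σ.symm_apply_eq, Equiv.Perm.sameCycle_apply_right]

end ClusterMutation

open ClusterMutation

theorem c_matrix_equivariance_preserved_general {I : Type*} [Fintype I] [DecidableEq I]
    (B C : I → I → ℤ)
    (σ : Equiv.Perm I)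
    (haut : ∀ i j, B (σ i) (σ j) = B i j)
    (hadm : ∀ i₁ i₂, σ.SameCycle i₁ i₂ →
      (i₁ ≠ i₂ → B i₁ i₂ = 0) ∧ ∀ j, 0 ≤ B i₁ j * B i₂ j)
    (hC : ∀ i j, C (σ i) (σ j) = C i j) (k : I) :
    ∀ i j,
      ((Finset.univ.filter (fun t => σ.SameCycle k t)).toList.foldr
          (fun t p => mutatePair p t) (B, C)).2 (σ i) (σ j)
        = ((Finset.univ.filter (fun t => σ.SameCycle k t)).toList.foldr
          (fun t p => mutatePair p t) (B, C)).2 i j := by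
  intro i j
  set L := (Finset.univ.filter (σ.SameCycle k)).toList
  have hfixed : Prod.map (relabel σ) (relabel σ) (B, C) = (B, C) := by
    ext a b <;> simp [relabel, haut, hC]
  have horbit : {t | σ.SameCycle k t}.Pairwise fun a b => B a b = 0 :=
    fun a ha b hb hab => (hadm a b ((Set.mem_ofPred.mp ha).symm.trans hb)).1 hab
  have hmutate : mutateSeq (L.map σ.symm) (B, C) = mutateSeq L (B, C) :=
    mutateSeq_perm (orbit_toList_map_symm_perm σ k) horbit fun t ht => by
      simpa [L, σ.symm_apply_eq, Equiv.Perm.sameCycle_apply_right] using ht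
  have hrel := mutateSeq_relabel σ L (B, C)
  rw [hfixed, hmutate] at hrel
  exact congrFun (congrFun (congrArg Prod.snd hrel) i) j

/-- σ-equivariance of the C-matrix is preserved by a single orbit mutation. -/
theorem c_matrix_equivariance_preserved {I : Type*} [Fintype I] [DecidableEq I]
    (B C : I → I → ℤ)
    (hskew : ∃ d : I → ℤ, (∀ i, 0 < d i) ∧ ∀ i j, d i * B i j = -(d j * B j i))
    (σ : Equiv.Perm I)
    (haut : ∀ i j, B (σ i) (σ j) = B i j)
    (hadm : ∀ i₁ i₂, σ.SameCycle i₁ i₂ →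
      (i₁ ≠ i₂ → B i₁ i₂ = 0) ∧ ∀ j, 0 ≤ B i₁ j * B i₂ j)
    (hC : ∀ i j, C (σ i) (σ j) = C i j) (k : I) :
    ∀ i j,
      ((Finset.univ.filter (fun t => σ.SameCycle k t)).toList.foldr
          (fun t p => mutatePair p t) (B, C)).2 (σ i) (σ j)
        = ((Finset.univ.filter (fun t => σ.SameCycle k t)).toList.foldr
          (fun t p => mutatePair p t) (B, C)).2 i j :=
  c_matrix_equivariance_preserved_general B C σ haut hadm hC k
end

section
/- Let B be a skew-symmetrizable integer matrix with stable admissible automorphism σ, and let D = (d_{ij}) be an integer matrix satisfying d_{σ(i)σ(j)} = d_{ij}. Suppose D' is obtained from D by an orbit mutation at orbit k̄: d'_{ij} = −d_{ij} + max(Σ_t d_{it}[b_{tj}]_+, Σ_t d_{it}[−b_{tj}]_+) if j ∈ k̄ (mutating at each index of k̄, which commute), and d'_{ij} = d_{ij} otherwise, while B is orbit-mutated accordingly. Then D' also satisfies d'_{σ(i)σ(j)} = d'_{ij}. -/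
open scoped Classical

/-- Mutation of a pair (exchange matrix, D-matrix) in direction `k`, via the
denominator-vector recursion. -/
def mutatePairD {I : Type*} [Fintype I] [DecidableEq I]
    (p : (I → I → ℤ) × (I → I → ℤ)) (k : I) : (I → I → ℤ) × (I → I → ℤ) :=
  (mutateB p.1 k,
    fun i j =>
      if j = k then
        -p.2 i k + max (∑ l, p.2 i l * max (p.1 l k) 0)
          (∑ l, p.2 i l * max (-p.1 l k) 0)
      else p.2 i j)

/-- Orbit mutation of the exchange matrix at the `σ`-orbit of `k`. -/
noncomputable def orbitMutB {I : Type*} [Fintype I] [DecidableEq I]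
    (σ : Equiv.Perm I) (B : I → I → ℤ) (k : I) : I → I → ℤ :=
  (Finset.univ.filter (fun t => σ.SameCycle k t)).toList.foldr
    (fun t M => mutateB M t) B

/-- `σ` is an admissible automorphism of `B`. -/
def AdmissibleAut {I : Type*} (σ : Equiv.Perm I) (B : I → I → ℤ) : Prop :=
  (∀ i j, B (σ i) (σ j) = B i j) ∧
  ∀ i₁ i₂, σ.SameCycle i₁ i₂ →
    (i₁ ≠ i₂ → B i₁ i₂ = 0) ∧ ∀ j, 0 ≤ B i₁ j * B i₂ j

/-!
Distinct indices of one σ-orbit are disconnected in `B` (`b_{tt'} = 0`). Hence mutating at one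
of them changes neither the columns of `B` at the others nor the entries of `D` that the
mutation formula at the others reads, so the orbit mutation replaces each column `j` of the orbit
by the one-step formula `mutatedDEntry B D · j` in the original `B` and `D`. That formula is
σ-equivariant because `B` and `D` are, after reindexing its sums by `σ`.
-/

section DMutation

variable {I : Type*} [Fintype I] [DecidableEq I]

def mutatedDEntry (B D : I → I → ℤ) (i k : I) : ℤ :=
  -D i k + max (∑ l, D i l * max (B l k) 0) (∑ l, D i l * max (-B l k) 0)

omit [Fintype I] in
lemma mutateB_apply_of_eq_zero {B : I → I → ℤ} {k j : I} (hjk : j ≠ k) (hkj : B k j = 0)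
    (i : I) : mutateB B k i j = B i j := by
  unfold mutateB
  by_cases hik : i = k
  · subst hik
    simp [hkj]
  · simp [hik, hjk, hkj]

lemma mutatePairD_fst (p : (I → I → ℤ) × (I → I → ℤ)) (k : I) :
    (mutatePairD p k).1 = mutateB p.1 k := rfl

lemma mutatePairD_snd_apply (p : (I → I → ℤ) × (I → I → ℤ)) (k i j : I) :
    (mutatePairD p k).2 i j = if j = k then mutatedDEntry p.1 p.2 i k else p.2 i j := rfl

omit [DecidableEq I] in
lemma mutatedDEntry_congr {B B' D D' : I → I → ℤ} {i j : I} (hB : ∀ l, B' l j = B l j)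
    (hD : ∀ l, B l j ≠ 0 → D' i l = D i l) (hDj : D' i j = D i j) :
    mutatedDEntry B' D' i j = mutatedDEntry B D i j := by
  have hterm : ∀ (f : ℤ → ℤ), f 0 = 0 → ∀ l, D' i l * f (B l j) = D i l * f (B l j) := by
    intro f hf l
    by_cases hl : B l j = 0
    · simp [hl, hf]
    · rw [hD l hl]
  simp only [mutatedDEntry, hB, hDj, hterm (fun b => max b 0) (by simp),
    hterm (fun b => max (-b) 0) (by simp)]

omit [DecidableEq I] in
lemma mutatedDEntry_perm {B D : I → I → ℤ} (σ : Equiv.Perm I)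
    (hB : ∀ l j, B (σ l) (σ j) = B l j) (hD : ∀ i l, D (σ i) (σ l) = D i l) (i j : I) :
    mutatedDEntry B D (σ i) (σ j) = mutatedDEntry B D i j := by
  unfold mutatedDEntry
  rw [← Equiv.sum_comp σ (fun l => D (σ i) l * max (B l (σ j)) 0),
    ← Equiv.sum_comp σ (fun l => D (σ i) l * max (-B l (σ j)) 0)]
  simp only [hB, hD]

lemma foldr_mutatePairD_fst_of_eq_zero {B D : I → I → ℤ} {L : List I} {j : I} (hj : j ∉ L)
    (hL : ∀ t ∈ L, B t j = 0) (i : I) :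
    (L.foldr (fun t p => mutatePairD p t) (B, D)).1 i j = B i j := by
  induction L generalizing i with
  | nil => rfl
  | cons u L ih =>
    simp only [List.mem_cons, not_or, forall_eq_or_imp] at hj hL
    rw [List.foldr_cons, mutatePairD_fst,
      mutateB_apply_of_eq_zero hj.1 (by rw [ih hj.2 hL.2]; exact hL.1), ih hj.2 hL.2]

lemma foldr_mutatePairD_snd {B D : I → I → ℤ} {L : List I} (hnd : L.Nodup)
    (hL : ∀ t ∈ L, ∀ t' ∈ L, t ≠ t' → B t t' = 0) (i j : I) :
    (L.foldr (fun t p => mutatePairD p t) (B, D)).2 i j =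
      if j ∈ L then mutatedDEntry B D i j else D i j := by
  induction L generalizing i j with
  | nil => simp
  | cons u L ih =>
    obtain ⟨huL, hnd'⟩ := List.nodup_cons.1 hnd
    have hL' : ∀ t ∈ L, ∀ t' ∈ L, t ≠ t' → B t t' = 0 := fun t ht t' ht' =>
      hL t (.tail _ ht) t' (.tail _ ht')
    have hcol : ∀ t ∈ L, B t u = 0 := fun t ht =>
      hL t (.tail _ ht) u (.head _) (ne_of_mem_of_not_mem ht huL)
    rw [List.foldr_cons, mutatePairD_snd_apply]
    by_cases hju : j = u
    · subst hju
      simp only [if_true, List.mem_cons_self]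
      refine mutatedDEntry_congr (foldr_mutatePairD_fst_of_eq_zero huL hcol) ?_ ?_
      · intro l hl
        rw [ih hnd' hL', if_neg fun hlL => hl (hcol l hlL)]
      · rw [ih hnd' hL', if_neg huL]
    · rw [if_neg hju, ih hnd' hL']
      simp only [List.mem_cons, hju, false_or]

end DMutation

theorem d_matrix_equivariance_preserved_general {I : Type*} [Fintype I] [DecidableEq I]
    (B D : I → I → ℤ)
    (σ : Equiv.Perm I)
    (hstable : ∀ ks : List I, AdmissibleAut σ (ks.foldl (orbitMutB σ) B))
    (hD : ∀ i j, D (σ i) (σ j) = D i j) (k : I) :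
    ∀ i j,
      ((Finset.univ.filter (fun t => σ.SameCycle k t)).toList.foldr
          (fun t p => mutatePairD p t) (B, D)).2 (σ i) (σ j)
        = ((Finset.univ.filter (fun t => σ.SameCycle k t)).toList.foldr
          (fun t p => mutatePairD p t) (B, D)).2 i j := by
  intro i j
  have hB : AdmissibleAut σ B := hstable []
  have horbit : ∀ t ∈ (Finset.univ.filter (fun t => σ.SameCycle k t)).toList,
      ∀ t' ∈ (Finset.univ.filter (fun t => σ.SameCycle k t)).toList, t ≠ t' → B t t' = 0 := by
    intro t ht t' ht'
    simp only [Finset.mem_toList, Finset.mem_filter, Finset.mem_univ, true_and] at ht ht'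
    exact (hB.2 t t' (ht.symm.trans ht')).1
  rw [foldr_mutatePairD_snd (Finset.nodup_toList _) horbit,
    foldr_mutatePairD_snd (Finset.nodup_toList _) horbit]
  simp only [Finset.mem_toList, Finset.mem_filter, Finset.mem_univ, true_and,
    Equiv.Perm.sameCycle_apply_right, mutatedDEntry_perm σ hB.1 hD, hD]

/-- σ-equivariance of the D-matrix is preserved by a single orbit mutation,
for a skew-symmetrizable `B` with stable admissible automorphism `σ`. -/
theorem d_matrix_equivariance_preserved {I : Type*} [Fintype I] [DecidableEq I]
    (B D : I → I → ℤ)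
    (hskew : ∃ d : I → ℤ, (∀ i, 0 < d i) ∧ ∀ i j, d i * B i j = -(d j * B j i))
    (σ : Equiv.Perm I)
    (hstable : ∀ ks : List I, AdmissibleAut σ (ks.foldl (orbitMutB σ) B))
    (hD : ∀ i j, D (σ i) (σ j) = D i j) (k : I) :
    ∀ i j,
      ((Finset.univ.filter (fun t => σ.SameCycle k t)).toList.foldr
          (fun t p => mutatePairD p t) (B, D)).2 (σ i) (σ j)
        = ((Finset.univ.filter (fun t => σ.SameCycle k t)).toList.foldr
          (fun t p => mutatePairD p t) (B, D)).2 i j :=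
  d_matrix_equivariance_preserved_general B D σ hstable hD k
end

section
/- Let B be a skew-symmetrizable matrix with stable admissible automorphism σ, C a σ-equivariant C-matrix (c_{σ(i)σ(j)} = c_{ij}) whose columns are sign-coherent, with each column having sign independent of the choice of representative within each σ-orbit of rows. Then the folded matrix C̄ with entries c̄_{ī j̄} := Σ_{s∈ī} c_{sj} satisfies the folded c-vector mutation rule: if (B', C') is obtained from (B, C) by orbit mutation at k̄, then c̄'_{ī j̄} = −c̄_{ī j̄} when j̄ = k̄, and c̄'_{ī j̄} = c̄_{ī j̄} + c̄_{ī k̄}[b̄_{k̄ j̄}]_+ + [−c̄_{ī k̄}]_+ b̄_{k̄ j̄} otherwise, where B̄ is the folding of B. -/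
open scoped Classical

/-!
Admissibility makes `B` vanish between distinct indices of the orbit `k̄`, so the mutations
composing the orbit mutation do not interact: the columns of `C` in `k̄` are negated and every
other column `j` changes by `∑_{t ∈ k̄} (c_{st} [b_{tj}]_+ + [-c_{st}]_+ b_{tj})`. Summing over
`s ∈ ī`, equivariance of `C` makes `∑_{s ∈ ī} c_{st}` independent of `t ∈ k̄`, and sign-coherence
lets the positive parts commute with the sums over `ī` (a column of `C`) and over `k̄` (the
entries `b_{tj}`, `t ∈ k̄`, which share a sign by admissibility).
-/

section Mutation

variable {I : Type*} [DecidableEq I]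

section Single

variable {B : I → I → ℤ} {p : (I → I → ℤ) × (I → I → ℤ)} {a t j s : I}

theorem mutateB_apply_self_left (B : I → I → ℤ) (a j : I) : mutateB B a a j = -B a j := by
  simp [mutateB]

theorem mutateB_apply_of_ne (hta : t ≠ a) (hja : j ≠ a) (hB : B t a = 0) :
    mutateB B a t j = B t j := by
  simp [mutateB, hta, hja, hB]

theorem mutateB_pairwise_eq_zero {K : Set I} (ha : a ∈ K)
    (hB : K.Pairwise fun t t' => B t t' = 0) :
    K.Pairwise fun t t' => mutateB B a t t' = 0 := by
  intro t ht t' ht' htt'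
  by_cases hta : t = a ∨ t' = a
  · simp [mutateB, hta, hB ht ht' htt']
  · push Not at hta
    simp [mutateB, hta, hB ht ht' htt', hB ht ha hta.1, hB ha ht' (Ne.symm hta.2)]

theorem mutatePair_snd_apply_self (p : (I → I → ℤ) × (I → I → ℤ)) (a s : I) :
    (mutatePair p a).2 s a = -p.2 s a := by
  simp [mutatePair]

theorem mutatePair_snd_apply_of_ne (hja : j ≠ a) :
    (mutatePair p a).2 s j =
      p.2 s j + p.2 s a * max (p.1 a j) 0 + max (-p.2 s a) 0 * p.1 a j := by
  simp [mutatePair, hja]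

end Single

section Sequence

variable (B C : I → I → ℤ) {K : Set I} {L : List I}

theorem foldr_mutatePair_fst_pairwise (hL : ∀ t ∈ L, t ∈ K)
    (hB : K.Pairwise fun t t' => B t t' = 0) :
    K.Pairwise fun t t' => (L.foldr (fun t p => mutatePair p t) (B, C)).1 t t' = 0 := by
  induction L with
  | nil => exact hB
  | cons a l ih =>
    exact mutateB_pairwise_eq_zero (hL a List.mem_cons_self)
      (ih fun t ht => hL t (List.mem_cons_of_mem a ht))

theorem foldr_mutatePair_fst_apply (hL : ∀ t ∈ L, t ∈ K) (hnd : L.Nodup)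
    (hB : K.Pairwise fun t t' => B t t' = 0) {t j : I} (ht : t ∈ K) (hj : j ∉ K) :
    (L.foldr (fun t p => mutatePair p t) (B, C)).1 t j = if t ∈ L then -B t j else B t j := by
  induction L with
  | nil => simp
  | cons a l ih =>
    have hlK : ∀ t ∈ l, t ∈ K := fun t ht => hL t (List.mem_cons_of_mem a ht)
    have ha : a ∈ K := hL a List.mem_cons_self
    obtain ⟨hal, hlnd⟩ := List.nodup_cons.mp hnd
    change mutateB (l.foldr (fun t p => mutatePair p t) (B, C)).1 a t j = _
    by_cases hta : t = a
    · subst hta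
      simp [mutateB_apply_self_left, ih hlK hlnd, hal]
    · rw [mutateB_apply_of_ne hta (by rintro rfl; exact hj ha)
        (foldr_mutatePair_fst_pairwise B C hlK hB ht ha hta), ih hlK hlnd]
      simp [hta]

theorem foldr_mutatePair_snd_apply_of_mem (hL : ∀ t ∈ L, t ∈ K) (hnd : L.Nodup)
    (hB : K.Pairwise fun t t' => B t t' = 0) (s : I) {j : I} (hj : j ∈ K) :
    (L.foldr (fun t p => mutatePair p t) (B, C)).2 s j = if j ∈ L then -C s j else C s j := by
  induction L with
  | nil => simp
  | cons a l ih =>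
    have hlK : ∀ t ∈ l, t ∈ K := fun t ht => hL t (List.mem_cons_of_mem a ht)
    have ha : a ∈ K := hL a List.mem_cons_self
    obtain ⟨hal, hlnd⟩ := List.nodup_cons.mp hnd
    rw [List.foldr_cons]
    by_cases hja : j = a
    · subst hja
      simp [mutatePair_snd_apply_self, ih hlK hlnd, hal]
    · rw [mutatePair_snd_apply_of_ne hja, ih hlK hlnd,
        foldr_mutatePair_fst_pairwise B C hlK hB ha hj (Ne.symm hja)]
      simp [hja]

theorem foldr_mutatePair_snd_apply_of_not_mem (hL : ∀ t ∈ L, t ∈ K) (hnd : L.Nodup)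
    (hB : K.Pairwise fun t t' => B t t' = 0) (s : I) {j : I} (hj : j ∉ K) :
    (L.foldr (fun t p => mutatePair p t) (B, C)).2 s j =
      C s j + (L.map fun t => C s t * max (B t j) 0 + max (-C s t) 0 * B t j).sum := by
  induction L with
  | nil => simp
  | cons a l ih =>
    have hlK : ∀ t ∈ l, t ∈ K := fun t ht => hL t (List.mem_cons_of_mem a ht)
    have ha : a ∈ K := hL a List.mem_cons_self
    obtain ⟨hal, hlnd⟩ := List.nodup_cons.mp hnd
    rw [List.foldr_cons, mutatePair_snd_apply_of_ne (by rintro rfl; exact hj ha), ih hlK hlnd,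
      foldr_mutatePair_snd_apply_of_mem B C hlK hlnd hB s ha,
      foldr_mutatePair_fst_apply B C hlK hlnd hB ha hj]
    simp only [hal, if_false, List.map_cons, List.sum_cons]
    ring

end Sequence

end Mutation

theorem Equiv.Perm.SameCycle.eq_of_apply_eq {α β : Type*} [Finite α] {σ : Equiv.Perm α}
    {g : α → β} (hg : ∀ x, g (σ x) = g x) {x y : α} (h : σ.SameCycle x y) : g x = g y := by
  obtain ⟨n, -, rfl⟩ := h.exists_nat_pow_eq
  rw [Equiv.Perm.coe_pow]
  exact (congrFun (Function.iterate_invariant (funext hg) n) x).symm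

theorem AdmissibleAut.pairwise_sameCycle {I : Type*} {σ : Equiv.Perm I} {B : I → I → ℤ}
    (hB : AdmissibleAut σ B) (k : I) :
    {t | σ.SameCycle k t}.Pairwise fun t t' => B t t' = 0 :=
  fun t ht t' ht' htt' => (hB.2 t t' (ht.symm.trans ht')).1 htt'

theorem AdmissibleAut.sign_coherent {I : Type*} {σ : Equiv.Perm I} {B : I → I → ℤ}
    (hB : AdmissibleAut σ B) (k j : I) :
    (∀ t, σ.SameCycle k t → 0 ≤ B t j) ∨ ∀ t, σ.SameCycle k t → B t j ≤ 0 := by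
  by_contra! ⟨⟨t, ht, hneg⟩, ⟨t', ht', hpos⟩⟩
  have := (hB.2 t t' (ht.symm.trans ht')).2 j
  nlinarith

theorem Finset.sum_max_zero_of_sign_coherent {ι α : Type*} [AddCommMonoid α] [LinearOrder α]
    [IsOrderedAddMonoid α] {S : Finset ι} {f : ι → α}
    (h : (∀ a ∈ S, 0 ≤ f a) ∨ ∀ a ∈ S, f a ≤ 0) :
    ∑ a ∈ S, max (f a) 0 = max (∑ a ∈ S, f a) 0 := by
  rcases h with h | h
  · rw [max_eq_left (Finset.sum_nonneg h)]
    exact Finset.sum_congr rfl fun a ha => max_eq_left (h a ha)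
  · rw [max_eq_right (Finset.sum_nonpos h)]
    exact Finset.sum_eq_zero fun a ha => max_eq_right (h a ha)

theorem sum_sameCycle_apply_eq_of_sameCycle {I β : Type*} [Fintype I] [DecidableEq I]
    [AddCommMonoid β] {σ : Equiv.Perm I} {C : I → I → β} (hC : ∀ i j, C (σ i) (σ j) = C i j)
    (i : I) {k t : I} (hkt : σ.SameCycle k t) :
    ∑ s ∈ Finset.univ.filter (fun s => σ.SameCycle i s), C s t =
      ∑ s ∈ Finset.univ.filter (fun s => σ.SameCycle i s), C s k := by
  set A := Finset.univ.filter fun s => σ.SameCycle i s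
  have hA : ∀ s, s ∈ A ↔ σ s ∈ A := by simp [A, Equiv.Perm.sameCycle_apply_right]
  refine (hkt.eq_of_apply_eq (g := fun t => ∑ s ∈ A, C s t) fun x => ?_).symm
  exact (Finset.sum_equiv σ hA fun s _ => (hC s x).symm).symm

theorem folded_c_matrix_mutation_general {I : Type*} [Fintype I] [DecidableEq I]
    (B C : I → I → ℤ)
    (σ : Equiv.Perm I)
    (hstable : ∀ ks : List I, AdmissibleAut σ (ks.foldl (orbitMutB σ) B))
    (hC : ∀ i j, C (σ i) (σ j) = C i j)
    (hsc : ∀ j, (fun i => C i j) ≠ 0 ∧ ((∀ i, 0 ≤ C i j) ∨ (∀ i, C i j ≤ 0)))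
    (k : I) :
    ∀ i j,
      (σ.SameCycle k j →
        (∑ s ∈ Finset.univ.filter (fun s => σ.SameCycle i s),
          ((Finset.univ.filter (fun t => σ.SameCycle k t)).toList.foldr
            (fun t p => mutatePair p t) (B, C)).2 s j)
        = -∑ s ∈ Finset.univ.filter (fun s => σ.SameCycle i s), C s j) ∧
      (¬ σ.SameCycle k j →
        (∑ s ∈ Finset.univ.filter (fun s => σ.SameCycle i s),
          ((Finset.univ.filter (fun t => σ.SameCycle k t)).toList.foldr
            (fun t p => mutatePair p t) (B, C)).2 s j)
        = (∑ s ∈ Finset.univ.filter (fun s => σ.SameCycle i s), C s j)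
          + (∑ s ∈ Finset.univ.filter (fun s => σ.SameCycle i s), C s k)
            * max (∑ t ∈ Finset.univ.filter (fun t => σ.SameCycle k t), B t j) 0
          + max (-(∑ s ∈ Finset.univ.filter (fun s => σ.SameCycle i s), C s k)) 0
            * ∑ t ∈ Finset.univ.filter (fun t => σ.SameCycle k t), B t j) := by
  intro i j
  set A := Finset.univ.filter fun s => σ.SameCycle i s
  set T := Finset.univ.filter fun t => σ.SameCycle k t
  have hB : AdmissibleAut σ B := hstable []
  have hT : ∀ t ∈ T.toList, t ∈ {t | σ.SameCycle k t} := by simp [T]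
  have hnd := T.nodup_toList
  have hK := hB.pairwise_sameCycle k
  refine ⟨fun hkj => ?_, fun hkj => ?_⟩
  · simp_rw [foldr_mutatePair_snd_apply_of_mem B C hT hnd hK _ hkj]
    simp [T, hkj]
  have hcol : ∀ t ∈ T, ∑ s ∈ A, C s t = ∑ s ∈ A, C s k := fun t ht =>
    sum_sameCycle_apply_eq_of_sameCycle hC i (by simpa [T] using ht)
  have hneg : ∀ t ∈ T, ∑ s ∈ A, max (-C s t) 0 = max (-∑ s ∈ A, C s k) 0 := fun t ht => by
    rw [← hcol t ht, ← Finset.sum_neg_distrib]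
    exact Finset.sum_max_zero_of_sign_coherent
      ((hsc t).2.symm.imp (fun h s _ => neg_nonneg.2 (h s)) (fun h s _ => neg_nonpos.2 (h s)))
  have hBj : ∑ t ∈ T, max (B t j) 0 = max (∑ t ∈ T, B t j) 0 :=
    Finset.sum_max_zero_of_sign_coherent <| by simpa [T] using hB.sign_coherent k j
  calc ∑ s ∈ A, (T.toList.foldr (fun t p => mutatePair p t) (B, C)).2 s j
      = ∑ s ∈ A, C s j +
          ∑ t ∈ T, ∑ s ∈ A, (C s t * max (B t j) 0 + max (-C s t) 0 * B t j) := by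
        simp_rw [foldr_mutatePair_snd_apply_of_not_mem B C hT hnd hK _ hkj,
          Finset.sum_map_toList, Finset.sum_add_distrib, Finset.sum_comm (s := A)]
    _ = ∑ s ∈ A, C s j + ∑ t ∈ T,
          ((∑ s ∈ A, C s k) * max (B t j) 0 + max (-∑ s ∈ A, C s k) 0 * B t j) := by
        congr 1
        refine Finset.sum_congr rfl fun t ht => ?_
        rw [Finset.sum_add_distrib, ← Finset.sum_mul, ← Finset.sum_mul, hcol t ht, hneg t ht]
    _ = _ := by
        rw [Finset.sum_add_distrib, ← Finset.mul_sum, ← Finset.mul_sum, hBj]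
        ring

/-- The folded C-matrix satisfies the folded c-vector mutation rule. -/
theorem folded_c_matrix_mutation {I : Type*} [Fintype I] [DecidableEq I]
    (B C : I → I → ℤ)
    (hskew : ∃ d : I → ℤ, (∀ i, 0 < d i) ∧ ∀ i j, d i * B i j = -(d j * B j i))
    (σ : Equiv.Perm I)
    (hstable : ∀ ks : List I, AdmissibleAut σ (ks.foldl (orbitMutB σ) B))
    (hC : ∀ i j, C (σ i) (σ j) = C i j)
    (hsc : ∀ j, (fun i => C i j) ≠ 0 ∧ ((∀ i, 0 ≤ C i j) ∨ (∀ i, C i j ≤ 0)))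
    (hrep : ∀ i s j, σ.SameCycle i s →
      (0 ≤ C i j ↔ 0 ≤ C s j) ∧ (C i j ≤ 0 ↔ C s j ≤ 0))
    (k : I) :
    ∀ i j,
      (σ.SameCycle k j →
        (∑ s ∈ Finset.univ.filter (fun s => σ.SameCycle i s),
          ((Finset.univ.filter (fun t => σ.SameCycle k t)).toList.foldr
            (fun t p => mutatePair p t) (B, C)).2 s j)
        = -∑ s ∈ Finset.univ.filter (fun s => σ.SameCycle i s), C s j) ∧
      (¬ σ.SameCycle k j →
        (∑ s ∈ Finset.univ.filter (fun s => σ.SameCycle i s),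
          ((Finset.univ.filter (fun t => σ.SameCycle k t)).toList.foldr
            (fun t p => mutatePair p t) (B, C)).2 s j)
        = (∑ s ∈ Finset.univ.filter (fun s => σ.SameCycle i s), C s j)
          + (∑ s ∈ Finset.univ.filter (fun s => σ.SameCycle i s), C s k)
            * max (∑ t ∈ Finset.univ.filter (fun t => σ.SameCycle k t), B t j) 0
          + max (-(∑ s ∈ Finset.univ.filter (fun s => σ.SameCycle i s), C s k)) 0
            * ∑ t ∈ Finset.univ.filter (fun t => σ.SameCycle k t), B t j) :=
  folded_c_matrix_mutation_general B C σ hstable hC hsc k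
end
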